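/- arXiv:1710.03670 — 3 statements merged into one kernel-verified Lean document; each statement's English description precedes it below -/
import Mathlib

section
/- Let a ∈ F satisfy a^{q+1} = 1 and let b ∈ F satisfy b^q + b = 0. Then the number of elements d ∈ F such that −a·d^q + a⁻¹·d = b is exactly q. -/
/-!
With `q = p^k` and `char F = p`, the map `φ d = -a d^q + a⁻¹ d` is additive. Its kernel consists
of roots of a nonzero polynomial of degree `q`, and since `x ↦ x^q` is an involution of `F` with
`a^q = a⁻¹`, its image lies in `B = {x | x^q + x = 0}`, again a root set of size at most `q`.
As `|ker φ| · |im φ| = q²`, both bounds are equalities, so `im φ = B` and every fibre over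
`b ∈ B` is a coset of `ker φ`, of size `q`.
-/

open Polynomial in
theorem ncard_setOf_mul_pow_add_mul_eq_zero_le {R : Type*} [CommRing R] [IsDomain R] {c : R}
    (e : R) (hc : c ≠ 0) {n : ℕ} (hn : 2 ≤ n) : {x : R | c * x ^ n + e * x = 0}.ncard ≤ n := by
  set P : R[X] := C c * X ^ n + C e * X
  have hP : P ≠ 0 := fun h => hc <| by
    simpa [P, coeff_X, show 1 ≠ n by omega] using congrArg (coeff · n) h
  have hdeg : P.natDegree ≤ n := by
    refine (natDegree_add_le _ _).trans (max_le ?_ ?_)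
    · exact (natDegree_C_mul_le _ _).trans (natDegree_X_pow_le n)
    · exact (natDegree_C_mul_le _ _).trans (natDegree_X_le.trans (by omega))
  have hroots : {x : R | c * x ^ n + e * x = 0} = P.rootSet R := by
    ext x
    simp [mem_rootSet_of_ne hP, P]
  exact hroots ▸ (P.ncard_rootSet_le R).trans hdeg

theorem AddMonoidHom.ncard_setOf_eq_of_mem_range {G H : Type*} [AddGroup G] [AddGroup H]
    (φ : G →+ H) {b : H} (hb : b ∈ Set.range φ) : {g | φ g = b}.ncard = Nat.card φ.ker := by
  obtain ⟨g₀, rfl⟩ := hb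
  have hfiber : {g | φ g = φ g₀} = (· + g₀) '' φ.ker := by
    ext g
    simp only [Set.mem_ofPred_eq, Set.mem_image, SetLike.mem_coe, AddMonoidHom.mem_ker]
    refine ⟨fun h => ⟨g - g₀, by rw [map_sub, h, sub_self], sub_add_cancel g g₀⟩, ?_⟩
    rintro ⟨k, hk, rfl⟩
    rw [map_add, hk, zero_add]
  rw [hfiber, Set.ncard_image_of_injective _ (add_left_injective g₀)]
  exact (Nat.card_coe_set_eq _).symm

theorem AddMonoidHom.card_eq_card_range_mul_card_ker {G H : Type*} [AddGroup G] [AddGroup H]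
    (φ : G →+ H) : Nat.card G = Nat.card φ.range * Nat.card φ.ker := by
  rw [φ.ker.card_eq_card_quotient_mul_card_addSubgroup,
    Nat.card_congr (QuotientAddGroup.quotientKerEquivRange φ).toEquiv]

theorem AddMonoidHom.ncard_setOf_eq_of_card_eq_sq {G H : Type*} [AddGroup G] [AddGroup H]
    [Finite H] (φ : G →+ H) {B : Set H} {m : ℕ} (hG : Nat.card G = m ^ 2)
    (hker : {g | φ g = 0}.ncard ≤ m) (hrange : ∀ g, φ g ∈ B) (hB : B.ncard ≤ m) {b : H}
    (hb : b ∈ B) : {g | φ g = b}.ncard = m := by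
  have hker' : Nat.card φ.ker ≤ m := by
    simpa [φ.ncard_setOf_eq_of_mem_range ⟨0, map_zero φ⟩] using hker
  have hcard_range : Nat.card φ.range = (Set.range φ).ncard := by
    rw [← AddMonoidHom.coe_range]
    exact Nat.card_coe_set_eq _
  have hrange' : Nat.card φ.range ≤ B.ncard :=
    hcard_range ▸ Set.ncard_le_ncard (Set.range_subset_iff.2 hrange)
  have hprod : m * m = Nat.card φ.range * Nat.card φ.ker := by
    rw [← sq, ← hG, φ.card_eq_card_range_mul_card_ker]
  have hm : Nat.card φ.ker = m ∧ Nat.card φ.range = m := by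
    constructor <;> nlinarith [Nat.zero_le (Nat.card φ.ker)]
  have hRB : Set.range φ = B := Set.eq_of_subset_of_ncard_le (Set.range_subset_iff.2 hrange)
    (by omega)
  rw [φ.ncard_setOf_eq_of_mem_range (hRB ▸ hb), hm.1]

theorem neg_mul_pow_add_inv_mul_pow_add_self {F : Type*} [Field F] [Fintype F] {p k : ℕ}
    [Fact p.Prime] [CharP F p] (hF : Fintype.card F = (p ^ k) ^ 2) {a : F}
    (ha : a ^ (p ^ k + 1) = 1) (d : F) :
    (-(a * d ^ p ^ k) + a⁻¹ * d) ^ p ^ k + (-(a * d ^ p ^ k) + a⁻¹ * d) = 0 := by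
  have hfrob : ∀ x : F, (x ^ p ^ k) ^ p ^ k = x := fun x => by
    rw [← pow_mul, ← sq, ← hF, FiniteField.pow_card]
  have ha0 : a ≠ 0 := by rintro rfl; simp at ha
  have haq : a ^ p ^ k = a⁻¹ := eq_inv_of_mul_eq_one_left (by rwa [← pow_succ])
  rw [neg_add_eq_sub, sub_pow_char_pow, mul_pow, mul_pow, hfrob, inv_pow, haq, inv_inv]
  ring

/-- Let `q` be a prime power and `F` a finite field with `q²` elements.  If
`a ∈ F` satisfies `a^(q+1) = 1` and `b ∈ F` satisfies `b^q + b = 0`, then the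
number of `d ∈ F` with `-a·d^q + a⁻¹·d = b` is exactly `q`. -/
theorem sl2_solution_count {F : Type*} [Field F] [Fintype F] (q : ℕ)
    (hq : IsPrimePow q) (hF : Fintype.card F = q ^ 2) (a b : F)
    (ha : a ^ (q + 1) = 1) (hb : b ^ q + b = 0) :
    {d : F | -(a * d ^ q) + a⁻¹ * d = b}.ncard = q := by
  have hq2 : 2 ≤ q := hq.two_le
  obtain ⟨p, k, hp, -, rfl⟩ := hq
  have := Fact.mk hp.nat_prime
  have : CharP F p := charP_of_card_eq_prime_pow (hF.trans (pow_mul p k 2).symm)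
  let φ : F →+ F := AddMonoidHom.mk' (fun d => -(a * d ^ p ^ k) + a⁻¹ * d)
    fun x y => by rw [add_pow_char_pow]; ring
  have ha0 : a ≠ 0 := by rintro rfl; simp at ha
  have hker : {d : F | -(a * d ^ p ^ k) + a⁻¹ * d = 0}.ncard ≤ p ^ k := by
    simpa only [neg_mul] using
      ncard_setOf_mul_pow_add_mul_eq_zero_le a⁻¹ (neg_ne_zero.2 ha0) hq2
  have hB : {x : F | x ^ p ^ k + x = 0}.ncard ≤ p ^ k := by
    simpa using ncard_setOf_mul_pow_add_mul_eq_zero_le (1 : F) one_ne_zero hq2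
  exact φ.ncard_setOf_eq_of_card_eq_sq (by rw [Nat.card_eq_fintype_card, hF]) hker
    (neg_mul_pow_add_inv_mul_pow_add_self hF ha) hB hb
end

section
/- Let R⁺ ⊆ R and for λ ∈ A set R_λ⁺ = R_λ ∩ R⁺. Let m ≥ 1 be an integer, let λ ∈ A with m²·λ = λ, and let z ∈ W satisfy z·λ = −m·λ and z·R_λ⁺ ⊆ R⁺. Then z·R_λ⁺ = R_λ⁺. -/
/-- Let `W` be a group acting on an abelian group `A` and on a finite set `R`,
`B` an abelian group and `⟨·,·⟩ : R × A → B` additive in the second variable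
and `W`-invariant.  Let `R⁺ ⊆ R`, and for `λ ∈ A` set `R_λ⁺ = R_λ ∩ R⁺`.  Let
`m ≥ 1`, `λ ∈ A` with `m²·λ = λ`, and `z ∈ W` with `z·λ = -m·λ` and
`z·R_λ⁺ ⊆ R⁺`.  Then `z·R_λ⁺ = R_λ⁺`. -/
theorem z_permutes_R_lambda_plus {W A R B : Type*} [Group W] [AddCommGroup A]
    [AddCommGroup B] [DistribMulAction W A] [MulAction W R] [Finite R]
    (f : R → A →+ B)
    (hinv : ∀ (w : W) (α : R) (l : A), f (w • α) (w • l) = f α l)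
    (Rplus : Set R) (m : ℕ) (hm : 1 ≤ m) (z : W) (l : A)
    (h2 : (m ^ 2) • l = l) (h1 : z • l = -(m • l))
    (hsub : (fun α : R => z • α) '' ({α : R | f α l = 0} ∩ Rplus) ⊆ Rplus) :
    (fun α : R => z • α) '' ({α : R | f α l = 0} ∩ Rplus)
      = {α : R | f α l = 0} ∩ Rplus := by
  set S : Set R := {α : R | f α l = 0} ∩ Rplus with hS
  -- the image is contained in S
  have hsubS : (fun α : R => z • α) '' S ⊆ S := by
    rintro _ ⟨α, hα, rfl⟩
    refine ⟨?_, hsub ⟨α, hα, rfl⟩⟩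
    have hα0 : f α l = 0 := hα.1
    have key : f (z • α) (m • l) = 0 := by
      have := hinv z α l
      rw [h1, map_neg] at this
      have : f (z • α) (m • l) = -(f α l) := by
        rw [← this, neg_neg]
      rw [this, hα0, neg_zero]
    have : f (z • α) l = 0 := by
      have h2' : (m • (m • l)) = l := by
        rw [← mul_smul, ← pow_two, h2]
      calc f (z • α) l = f (z • α) (m • (m • l)) := by rw [h2']
        _ = m • f (z • α) (m • l) := by rw [map_nsmul]
        _ = 0 := by rw [key, smul_zero]
    exact this
  -- injectivity + finiteness
  have hfin : S.Finite := Set.toFinite S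
  have hinj : Function.Injective (fun α : R => z • α) := MulAction.injective z
  have hcard : ((fun α : R => z • α) '' S).ncard = S.ncard :=
    Set.ncard_image_of_injective S hinj
  exact Set.eq_of_subset_of_ncard_le hsubS (le_of_eq hcard.symm) hfin
end

section
/- Let ν : C → ℂˣ be a group homomorphism which is nontrivial on C but whose restriction to D is trivial. Then Σ_{y ∈ D} ν(y) + (q+1)·Σ_{y ∈ C, y ∉ D} ν(y) = −q(q+1). -/
open Finset

/-- Let `q > 1`, let `C` be a finite cyclic group of order `q² - 1` and
`D = {y ∈ C : y^(q+1) = 1}`.  Let `ν : C → ℂˣ` be a homomorphism which is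
nontrivial on `C` but trivial on `D`.  Then
`Σ_{y ∈ D} ν(y) + (q+1)·Σ_{y ∈ C, y ∉ D} ν(y) = -q(q+1)`. -/
theorem character_sum_eval {C : Type*} [CommGroup C] [Fintype C] [IsCyclic C]
    [DecidableEq C] (q : ℕ) (hq : 1 < q) (hcard : Fintype.card C = q ^ 2 - 1)
    (ν : C →* ℂˣ) (hnt : ν ≠ 1) (htriv : ∀ y : C, y ^ (q + 1) = 1 → ν y = 1) :
    (∑ y ∈ univ.filter (fun y : C => y ^ (q + 1) = 1), ((ν y : ℂˣ) : ℂ))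
      + (q + 1) * (∑ y ∈ univ.filter (fun y : C => y ^ (q + 1) ≠ 1), ((ν y : ℂˣ) : ℂ))
      = -((q : ℂ) * (q + 1)) := by
  have htot : (∑ y : C, ((ν y : ℂˣ) : ℂ)) = 0 := by
    have := sum_hom_units_eq_zero ((Units.coeHom ℂ).comp ν) (by
      intro h
      apply hnt
      refine MonoidHom.ext fun x => Units.ext ?_
      have hx := DFunLike.congr_fun h x
      simpa using hx)
    simpa using this
  have hfac : q ^ 2 - 1 = (q + 1) * (q - 1) := by
    simpa using Nat.sq_sub_sq q 1
  have hD : (univ.filter (fun y : C => y ^ (q + 1) = 1)).card = q + 1 := by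
    have hle : (univ.filter (fun y : C => y ^ (q + 1) = 1)).card ≤ q + 1 :=
      IsCyclic.card_pow_eq_one_le (Nat.succ_pos q)
    obtain ⟨g, hg⟩ := IsCyclic.exists_generator (α := C)
    have horder : orderOf g = q ^ 2 - 1 := by
      rw [orderOf_eq_card_of_forall_mem_zpowers hg, Nat.card_eq_fintype_card, hcard]
    have hgcd : Nat.gcd (q ^ 2 - 1) (q - 1) = q - 1 :=
      Nat.gcd_eq_right ⟨q + 1, by rw [hfac]; ring⟩
    have hordh : orderOf (g ^ (q - 1)) = q + 1 := by
      rw [orderOf_pow, horder, hgcd, hfac,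
        Nat.mul_div_assoc _ dvd_rfl, Nat.div_self (by omega : 0 < q - 1), mul_one]
    have hpow : (g ^ (q - 1)) ^ (q + 1) = 1 := by
      rw [← hordh]; exact pow_orderOf_eq_one _
    have hge : q + 1 ≤ (univ.filter (fun y : C => y ^ (q + 1) = 1)).card := by
      refine Finset.le_card_of_inj_on_range (fun k => (g ^ (q - 1)) ^ k) ?_ ?_
      · intro i _
        simp only [mem_filter, mem_univ, true_and]
        rw [← pow_mul, mul_comm, pow_mul, hpow, one_pow]
      · intro i hi j hj hij
        exact pow_injOn_Iio_orderOf (by simpa [hordh] using hi)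
          (by simpa [hordh] using hj) hij
    omega
  have hDsum : (∑ y ∈ univ.filter (fun y : C => y ^ (q + 1) = 1), ((ν y : ℂˣ) : ℂ))
      = (q : ℂ) + 1 := by
    rw [Finset.sum_congr rfl (fun y hy => by
      rw [htriv y (Finset.mem_filter.mp hy).2] : ∀ y ∈ _, _ = ((1 : ℂˣ) : ℂ))]
    simp [hD]
  have hsplit : (∑ y ∈ univ.filter (fun y : C => y ^ (q + 1) = 1), ((ν y : ℂˣ) : ℂ))
      + (∑ y ∈ univ.filter (fun y : C => y ^ (q + 1) ≠ 1), ((ν y : ℂˣ) : ℂ))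
      = ∑ y : C, ((ν y : ℂˣ) : ℂ) := by
    rw [← Finset.sum_filter_add_sum_filter_not univ (fun y : C => y ^ (q + 1) = 1)]
  have h2 : (∑ y ∈ univ.filter (fun y : C => y ^ (q + 1) ≠ 1), ((ν y : ℂˣ) : ℂ))
      = -((q : ℂ) + 1) := by
    rw [htot, hDsum] at hsplit
    linear_combination hsplit
  rw [hDsum, h2]
  ring
end
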